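/- L² comparison of distribution functions via quantile functions: Let M ≥ 1 and a < b. Let F₁, F₂ : [a, b] → [0, 1] be continuously differentiable, strictly increasing functions with F_i(a) = 0, F_i(b) = 1 and 1/M ≤ F_i′(u) ≤ M for all u ∈ [a, b] and i = 1, 2, and let Q_i : [0,1] → [a, b] denote the inverse function of F_i. Then ∫_a^b (F₁(u) − F₂(u))² du ≤ M³ ∫₀¹ (Q₁(s) − Q₂(s))² ds. -/

import Mathlib

/-!
Put `s = F₁(u)`, so that `Q₁(s) = u`. Then `F₁(u) - F₂(u) = F₂(Q₂ s) - F₂(Q₁ s)`, and since `F₂` is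
`M`-Lipschitz, `(F₁ u - F₂ u)² ≤ M² (Q₁ s - Q₂ s)² ≤ M³ F₁'(u) (Q₁ s - Q₂ s)²` because
`M F₁' ≥ 1`. Integrating over `[a, b]` and substituting `s = F₁(u)` gives the claim. The lower
density bound also makes the quantile functions `M`-Lipschitz, hence continuous, which is what the
substitution needs.
-/

open MeasureTheory Set NNReal

theorem Convex.mul_sub_le_image_sub_of_le_derivWithin {D : Set ℝ} (hD : Convex ℝ D)
    {f : ℝ → ℝ} (hf : DifferentiableOn ℝ f D) {C : ℝ}
    (hC : ∀ x ∈ D, C ≤ derivWithin f D x) :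
    ∀ x ∈ D, ∀ y ∈ D, x ≤ y → C * (y - x) ≤ f y - f x :=
  hD.mul_sub_le_image_sub_of_le_deriv hf.continuousOn (hf.mono interior_subset) fun x hx => by
    simpa only [derivWithin_of_mem_nhds (mem_interior_iff_mem_nhds.1 hx)] using
      hC x (interior_subset hx)

theorem Convex.dist_le_mul_dist_of_inv_le_derivWithin {D : Set ℝ} (hD : Convex ℝ D)
    {f : ℝ → ℝ} (hf : DifferentiableOn ℝ f D) {K : ℝ≥0} (hK : 0 < K)
    (hC : ∀ x ∈ D, (K : ℝ)⁻¹ ≤ derivWithin f D x) {x y : ℝ} (hx : x ∈ D) (hy : y ∈ D) :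
    dist x y ≤ K * dist (f x) (f y) := by
  wlog hxy : x ≤ y generalizing x y
  · simpa only [dist_comm] using this hy hx (le_of_not_ge hxy)
  have hK' : (0 : ℝ) < K := hK
  have hslope := hD.mul_sub_le_image_sub_of_le_derivWithin hf hC x hx y hy hxy
  rw [dist_comm, Real.dist_eq, abs_of_nonneg (sub_nonneg.2 hxy), dist_comm, Real.dist_eq]
  calc y - x = K * ((K : ℝ)⁻¹ * (y - x)) := by field_simp
    _ ≤ K * |f y - f x| := by gcongr; exact hslope.trans (le_abs_self _)

theorem LipschitzOnWith.of_rightInvOn {α β : Type*} [PseudoMetricSpace α]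
    [PseudoMetricSpace β] {f : α → β} {g : β → α} {s : Set α} {t : Set β} {K : ℝ≥0}
    (hf : ∀ x ∈ s, ∀ y ∈ s, dist x y ≤ K * dist (f x) (f y)) (hg : MapsTo g t s)
    (hgf : RightInvOn g f t) : LipschitzOnWith K g t :=
  LipschitzOnWith.of_dist_le_mul fun x hx y hy => by
    simpa only [hgf hx, hgf hy] using hf _ (hg hx) _ (hg hy)

theorem Convex.lipschitzOnWith_of_rightInvOn {D t : Set ℝ} (hD : Convex ℝ D) {f g : ℝ → ℝ}
    (hf : DifferentiableOn ℝ f D) {K : ℝ≥0} (hK : 0 < K)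
    (hC : ∀ x ∈ D, (K : ℝ)⁻¹ ≤ derivWithin f D x) (hg : MapsTo g t D)
    (hgf : RightInvOn g f t) : LipschitzOnWith K g t :=
  .of_rightInvOn (fun _ hx _ hy => hD.dist_le_mul_dist_of_inv_le_derivWithin hf hK hC hx hy)
    hg hgf

theorem intervalIntegral.integral_derivWithin_mul_comp {f g : ℝ → ℝ} {a b : ℝ} (hab : a < b)
    (hf : ContDiffOn ℝ 1 f (Icc a b)) (hg : ContinuousOn g (f '' Icc a b)) :
    ∫ x in a..b, derivWithin f (Icc a b) x * g (f x) = ∫ y in f a..f b, g y := by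
  have hIcc : uIcc a b = Icc a b := uIcc_of_le hab.le
  simp_rw [mul_comm (derivWithin f _ _)]
  refine integral_comp_mul_deriv'' (hIcc ▸ hf.continuousOn) (fun x hx => ?_)
    (hIcc ▸ hf.continuousOn_derivWithin (uniqueDiffOn_Icc hab) le_rfl) (hIcc ▸ hg)
  rw [min_eq_left hab.le, max_eq_right hab.le] at hx
  have hx' : HasDerivWithinAt f (derivWithin f (Icc a b) x) (Icc a b) x :=
    (hf.differentiableOn one_ne_zero x (Ioo_subset_Icc_self hx)).hasDerivWithinAt
  exact (hx'.hasDerivAt (Icc_mem_nhds hx.1 hx.2)).hasDerivWithinAt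

theorem sq_sub_le_mul_sq_quantile_sub {F₁ F₂ Q₁ Q₂ : ℝ → ℝ} {s : Set ℝ} {K : ℝ≥0}
    {u d : ℝ} (hK : 0 < K) (hF₂ : LipschitzOnWith K F₂ s) (hu : u ∈ s)
    (hQF₁ : Q₁ (F₁ u) = u) (hQ₂ : Q₂ (F₁ u) ∈ s ∧ F₂ (Q₂ (F₁ u)) = F₁ u)
    (hd : (K : ℝ)⁻¹ ≤ d) :
    (F₁ u - F₂ u) ^ 2 ≤ K ^ 3 * (d * (Q₁ (F₁ u) - Q₂ (F₁ u)) ^ 2) := by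
  rw [hQF₁]
  have hdist : |F₁ u - F₂ u| ≤ K * |u - Q₂ (F₁ u)| := by
    rw [abs_sub_comm u]
    simpa only [Real.dist_eq, hQ₂.2] using hF₂.dist_le_mul _ hQ₂.1 _ hu
  have hKd : 1 ≤ K * d := by
    rwa [inv_le_iff_one_le_mul₀' (by exact_mod_cast hK)] at hd
  calc (F₁ u - F₂ u) ^ 2 ≤ (K * |u - Q₂ (F₁ u)|) ^ 2 := by
        rw [← sq_abs]; gcongr
    _ = K ^ 2 * (u - Q₂ (F₁ u)) ^ 2 * 1 := by rw [mul_pow, sq_abs, mul_one]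
    _ ≤ K ^ 2 * (u - Q₂ (F₁ u)) ^ 2 * (K * d) := by gcongr
    _ = K ^ 3 * (d * (u - Q₂ (F₁ u)) ^ 2) := by ring

theorem cdf_quantile_L2_comparison (M a b : ℝ) (hM : 1 ≤ M) (hab : a < b)
    (F₁ F₂ Q₁ Q₂ : ℝ → ℝ)
    (hF₁ : ContDiffOn ℝ 1 F₁ (Set.Icc a b))
    (hF₂ : ContDiffOn ℝ 1 F₂ (Set.Icc a b))
    (hmono₁ : StrictMonoOn F₁ (Set.Icc a b))
    (hF₁a : F₁ a = 0) (hF₁b : F₁ b = 1)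
    (hd₁ : ∀ u ∈ Set.Icc a b,
      1 / M ≤ derivWithin F₁ (Set.Icc a b) u ∧ derivWithin F₁ (Set.Icc a b) u ≤ M)
    (hd₂ : ∀ u ∈ Set.Icc a b,
      1 / M ≤ derivWithin F₂ (Set.Icc a b) u ∧ derivWithin F₂ (Set.Icc a b) u ≤ M)
    (hQ₁ : ∀ s ∈ Set.Icc (0 : ℝ) 1, Q₁ s ∈ Set.Icc a b ∧ F₁ (Q₁ s) = s)
    (hQ₂ : ∀ s ∈ Set.Icc (0 : ℝ) 1, Q₂ s ∈ Set.Icc a b ∧ F₂ (Q₂ s) = s)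
    (hQF₁ : ∀ u ∈ Set.Icc a b, Q₁ (F₁ u) = u) :
    ∫ u in a..b, (F₁ u - F₂ u) ^ 2 ≤ M ^ 3 * ∫ s in (0 : ℝ)..1, (Q₁ s - Q₂ s) ^ 2 := by
  lift M to ℝ≥0 using zero_le_one.trans hM
  have hM0 : 0 < M := by exact_mod_cast zero_lt_one.trans_le hM
  simp only [one_div] at hd₁ hd₂
  have hF₁' : DifferentiableOn ℝ F₁ (Icc a b) := hF₁.differentiableOn one_ne_zero
  have hF₂' : DifferentiableOn ℝ F₂ (Icc a b) := hF₂.differentiableOn one_ne_zero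
  have hQ₁c := ((convex_Icc a b).lipschitzOnWith_of_rightInvOn hF₁' hM0
    (fun u hu => (hd₁ u hu).1) (fun s hs => (hQ₁ s hs).1) (fun s hs => (hQ₁ s hs).2)).continuousOn
  have hQ₂c := ((convex_Icc a b).lipschitzOnWith_of_rightInvOn hF₂' hM0
    (fun u hu => (hd₂ u hu).1) (fun s hs => (hQ₂ s hs).1) (fun s hs => (hQ₂ s hs).2)).continuousOn
  have hF₂lip : LipschitzOnWith M F₂ (Icc a b) :=
    (convex_Icc a b).lipschitzOnWith_of_nnnorm_derivWithin_le hF₂' fun u hu => by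
      rw [← NNReal.coe_le_coe, coe_nnnorm, Real.norm_eq_abs, abs_le]
      exact ⟨by linarith [(hd₂ u hu).1, inv_nonneg.2 M.coe_nonneg], (hd₂ u hu).2⟩
  have hF₁maps : MapsTo F₁ (Icc a b) (Icc 0 1) := fun u hu =>
    ⟨hF₁a ▸ hmono₁.monotoneOn (left_mem_Icc.2 hab.le) hu hu.1,
      hF₁b ▸ hmono₁.monotoneOn hu (right_mem_Icc.2 hab.le) hu.2⟩
  have hg : ContinuousOn (fun s => (Q₁ s - Q₂ s) ^ 2) (Icc 0 1) := (hQ₁c.sub hQ₂c).pow 2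
  have hF₁'c := hF₁.continuousOn_derivWithin (uniqueDiffOn_Icc hab) le_rfl
  calc ∫ u in a..b, (F₁ u - F₂ u) ^ 2
      ≤ ∫ u in a..b, (M : ℝ) ^ 3 *
          (derivWithin F₁ (Icc a b) u * (Q₁ (F₁ u) - Q₂ (F₁ u)) ^ 2) :=
        intervalIntegral.integral_mono_on hab.le
          (((hF₁.continuousOn.sub hF₂.continuousOn).pow 2).intervalIntegrable_of_Icc hab.le)
          ((continuousOn_const.mul (hF₁'c.mul (hg.comp hF₁.continuousOn hF₁maps))
            ).intervalIntegrable_of_Icc hab.le)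
          fun u hu => sq_sub_le_mul_sq_quantile_sub hM0 hF₂lip hu (hQF₁ u hu)
            (hQ₂ _ (hF₁maps hu)) (hd₁ u hu).1
    _ = M ^ 3 * ∫ s in (0 : ℝ)..1, (Q₁ s - Q₂ s) ^ 2 := by
        rw [intervalIntegral.integral_const_mul,
          intervalIntegral.integral_derivWithin_mul_comp hab hF₁
            (hg.mono (image_subset_iff.2 hF₁maps)), hF₁a, hF₁b]
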